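/- arXiv:1309.5925 — 3 statements merged into one kernel-verified Lean document; each statement's English description precedes it below -/
import Mathlib

section
/- Assume for all i, j that A⁺ i j = ⊥ or A⁻ i j = ⊥, and for all i that b⁺ i = ⊥ or b⁻ i = ⊥. Then there exist 𝐀 : Matrix (Fin m) (Fin n) K, 𝐛 : Fin m → K and 𝐜 : Fin n → K such that: (sign/valuation conditions) for all i, j, if A⁺ i j ≠ ⊥ then 𝐀 i j is positive with val (𝐀 i j) = A⁺ i j, if A⁻ i j ≠ ⊥ then 𝐀 i j is negative with val (𝐀 i j) = A⁻ i j, and if A⁺ i j = A⁻ i j = ⊥ then 𝐀 i j = 0 (analogously for 𝐛 relative to b⁺, b⁻), each 𝐜 j is nonnegative with val (𝐜 j) = c j; and, writing 𝓟 := { 𝐱 : Fin n → K | (∀ j, 𝐱 j ≥ 0) ∧ ∀ i, Σ_j (𝐀 i j · 𝐱 j) + 𝐛 i ≥ 0 }, one has: (a) { (fun j => val (𝐱 j)) | 𝐱 ∈ 𝓟 } = P(A, b); (b) if 𝐱* ∈ 𝓟 satisfies Σ_j 𝐜 j · 𝐱* j ≤ Σ_j 𝐜 j · 𝐲 j for all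 𝐲 ∈ 𝓟, then for all x ∈ P(A, b), ⊔_j (c j + val (𝐱* j)) ≤ ⊔_j (c j + x j). -/
/-!
Inside the ordered field `Lex (HahnSeries ℝ ℝ)`, `hahnVal` is monotone on nonnegative elements
and ultrametric, so the valuation of a sum of nonnegative terms is the largest valuation of a term.
Lift a finite tropical coefficient `a` to `(n + 1) t ^ a` or `-t ^ a` according to its sign, and a
tropical point `x` to `(t ^ x j)_j`. If a lifted constraint holds at a nonnegative point, its
negative part is dominated by its positive part, and taking valuations gives the tropical
constraint. Conversely, at the lift of a tropical point, the positive term `(n + 1) t ^ r` of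
maximal valuation outweighs the at most `n` other terms, each at least `-t ^ r`. Since `𝓟` contains
the lift of every tropical point, and the valuation of the objective `∑ t ^ c j * x j` is
`max (c j + val x j)`, optimality over `𝓟` descends to the tropical problem.
-/

noncomputable section
open scoped Classical
open Finset

/-- The valuation `val : HahnSeries ℝ ℝ → WithBot ℝ`, with `val 𝐱 = -𝐱.order` for `𝐱 ≠ 0`
and `val 0 = ⊥`. -/
def hahnVal (x : HahnSeries ℝ ℝ) : WithBot ℝ :=
  if x = 0 then ⊥ else ↑(-x.order)

/-- A Hahn series is positive when it is nonzero with positive leading coefficient. -/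
def HahnPos (x : HahnSeries ℝ ℝ) : Prop :=
  x ≠ 0 ∧ 0 < x.coeff x.order

/-- A Hahn series is negative when it is nonzero with negative leading coefficient. -/
def HahnNeg (x : HahnSeries ℝ ℝ) : Prop :=
  x ≠ 0 ∧ x.coeff x.order < 0

/-- A Hahn series is nonnegative when it is zero or positive. -/
def HahnNonneg (x : HahnSeries ℝ ℝ) : Prop :=
  x = 0 ∨ 0 < x.coeff x.order

/-- `𝐱 ≥ 𝐲` iff `𝐱 - 𝐲` is nonnegative. -/
def HahnGe (x y : HahnSeries ℝ ℝ) : Prop :=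
  HahnNonneg (x - y)

/-- The tropical polyhedron `P(A, b)` over `WithBot ℝ`, given the signed data
`A⁺, A⁻, b⁺, b⁻`. -/
def tropPolyhedron {m n : ℕ} (Ap An : Matrix (Fin m) (Fin n) (WithBot ℝ))
    (bp bn : Fin m → WithBot ℝ) : Set (Fin n → WithBot ℝ) :=
  {x | ∀ i, (univ.sup fun j => An i j + x j) ⊔ bn i ≤ (univ.sup fun j => Ap i j + x j) ⊔ bp i}

open HahnSeries

namespace TropicalLift

local notation "K" => HahnSeries ℝ ℝ

theorem hahnNonneg_iff {x : K} : HahnNonneg x ↔ 0 ≤ toLex x := by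
  rw [← leadingCoeff_nonneg_iff, ofLex_toLex, le_iff_eq_or_lt, eq_comm, leadingCoeff_eq_zero,
    leadingCoeff_eq, HahnNonneg]

theorem hahnPos_iff {x : K} : HahnPos x ↔ 0 < toLex x := by
  rw [← leadingCoeff_pos_iff, ofLex_toLex, HahnPos, ← leadingCoeff_eq]
  exact ⟨And.right, fun h => ⟨leadingCoeff_ne_zero.mp h.ne', h⟩⟩

theorem hahnNeg_iff {x : K} : HahnNeg x ↔ toLex x < 0 := by
  rw [← leadingCoeff_neg_iff, ofLex_toLex, HahnNeg, ← leadingCoeff_eq]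
  exact ⟨And.right, fun h => ⟨leadingCoeff_ne_zero.mp h.ne, h⟩⟩

theorem hahnGe_iff {x y : K} : HahnGe x y ↔ toLex y ≤ toLex x := by
  rw [HahnGe, hahnNonneg_iff, toLex_sub, sub_nonneg]

theorem hahnVal_le_hahnVal_iff {x y : K} : hahnVal x ≤ hahnVal y ↔ y.orderTop ≤ x.orderTop := by
  rcases eq_or_ne x 0 with rfl | hx
  · simp [hahnVal]
  rcases eq_or_ne y 0 with rfl | hy
  · simp [hahnVal, hx]
  simp [hahnVal, hx, hy, ← order_eq_orderTop_of_ne_zero]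

theorem hahnVal_le_hahnVal_of_le {x y : K} (hx : 0 ≤ toLex x) (hxy : toLex x ≤ toLex y) :
    hahnVal x ≤ hahnVal y := by
  rw [hahnVal_le_hahnVal_iff]
  by_contra! hlt
  exact (abs_le_abs_of_nonneg hx hxy).not_gt (abs_lt_abs_of_orderTop_ofLex hlt)

theorem hahnVal_add_le (x y : K) : hahnVal (x + y) ≤ hahnVal x ⊔ hahnVal y := by
  rcases le_total (hahnVal x) (hahnVal y) with h | h
  · rw [sup_eq_right.mpr h, hahnVal_le_hahnVal_iff]
    rw [hahnVal_le_hahnVal_iff] at h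
    exact (min_eq_right h).ge.trans min_orderTop_le_orderTop_add
  · rw [sup_eq_left.mpr h, hahnVal_le_hahnVal_iff]
    rw [hahnVal_le_hahnVal_iff] at h
    exact (min_eq_left h).ge.trans min_orderTop_le_orderTop_add

theorem hahnVal_sum_le {ι : Type*} (s : Finset ι) (f : ι → K) :
    hahnVal (∑ k ∈ s, f k) ≤ s.sup fun k => hahnVal (f k) :=
  Finset.sum_induction f (fun z => hahnVal z ≤ _)
    (fun _ _ ha hb => (hahnVal_add_le _ _).trans (sup_le ha hb)) (by simp [hahnVal])
    (fun _ hk => le_sup (f := fun k => hahnVal (f k)) hk)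

theorem hahnVal_sum_of_nonneg {ι : Type*} {s : Finset ι} {f : ι → K}
    (hf : ∀ k ∈ s, 0 ≤ toLex (f k)) :
    hahnVal (∑ k ∈ s, f k) = s.sup fun k => hahnVal (f k) :=
  (hahnVal_sum_le s f).antisymm <| Finset.sup_le fun _ hk =>
    hahnVal_le_hahnVal_of_le (hf _ hk) (single_le_sum (f := toLex ∘ f) hf hk)

theorem hahnVal_neg (x : K) : hahnVal (-x) = hahnVal x := by
  simp [hahnVal, order_neg]

theorem hahnVal_mul (x y : K) : hahnVal (x * y) = hahnVal x + hahnVal y := by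
  rcases eq_or_ne x 0 with rfl | hx
  · simp [hahnVal]
  rcases eq_or_ne y 0 with rfl | hy
  · simp [hahnVal]
  simp only [hahnVal, mul_eq_zero, hx, hy, or_self, if_false, order_mul hx hy, neg_add,
    WithBot.coe_add]

theorem hahnVal_one : hahnVal (1 : K) = 0 := by
  simp [hahnVal, order_one]

theorem hahnVal_natCast {C : ℕ} (hC : C ≠ 0) : hahnVal (C : K) = 0 := by
  rw [← single_zero_natCast, hahnVal, if_neg (single_ne_zero (Nat.cast_ne_zero.mpr hC)),
    order_single (Nat.cast_ne_zero.mpr hC), neg_zero, WithBot.coe_zero]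

theorem hahnVal_le_of_sum_nonneg {ι : Type*} {s : Finset ι} {f : ι → K} {V : WithBot ℝ}
    (hV : ∀ k ∈ s, 0 ≤ toLex (f k) → hahnVal (f k) ≤ V) (hsum : 0 ≤ toLex (∑ k ∈ s, f k)) :
    ∀ k ∈ s, hahnVal (f k) ≤ V := by
  set P := ∑ k ∈ s with 0 ≤ toLex (f k), f k
  set N := ∑ k ∈ s with ¬ 0 ≤ toLex (f k), f k
  have hNP : -toLex N ≤ toLex P := by
    rw [neg_le_iff_add_nonneg, ← toLex_add, sum_filter_add_sum_filter_not]
    exact hsum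
  have hP : hahnVal P ≤ V := (hahnVal_sum_le _ _).trans <| Finset.sup_le fun k hk =>
    hV k (mem_filter.mp hk).1 (mem_filter.mp hk).2
  intro k hk
  by_cases hfk : 0 ≤ toLex (f k)
  · exact hV k hk hfk
  have hkN : -toLex (f k) ≤ -toLex N := by
    rw [← toLex_neg, ← toLex_neg, ← sum_neg_distrib]
    exact single_le_sum (f := fun k => toLex (-f k))
      (fun l hl => neg_nonneg.mpr (not_le.mp (mem_filter.mp hl).2).le) (mem_filter.mpr ⟨hk, hfk⟩)
  rw [← hahnVal_neg]
  exact (hahnVal_le_hahnVal_of_le (neg_nonneg.mpr (not_le.mp hfk).le) (hkN.trans hNP)).trans hP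

/-- `t ^ v` for the monomial `t = single (-1) 1` of valuation `1`, with `t ^ ⊥ = 0`. -/
def tpow : WithBot ℝ → K
  | ⊥ => 0
  | (a : ℝ) => single (-a) 1

@[simp] theorem tpow_bot : tpow ⊥ = 0 := rfl

@[simp] theorem tpow_coe (a : ℝ) : tpow a = single (-a) 1 := rfl

theorem tpow_add (v w : WithBot ℝ) : tpow (v + w) = tpow v * tpow w := by
  induction v with
  | bot => simp
  | coe a =>
    induction w with
    | bot => simp
    | coe b => rw [← WithBot.coe_add, tpow_coe, tpow_coe, tpow_coe, single_mul_single, neg_add,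
        mul_one]

@[simp] theorem hahnVal_tpow (v : WithBot ℝ) : hahnVal (tpow v) = v := by
  induction v with
  | bot => simp [hahnVal]
  | coe a => simp [hahnVal, order_single]

theorem tpow_pos {v : WithBot ℝ} (hv : v ≠ ⊥) : 0 < toLex (tpow v) := by
  lift v to ℝ using hv
  rw [← leadingCoeff_pos_iff, ofLex_toLex, tpow_coe, leadingCoeff_of_single]
  exact one_pos

theorem tpow_nonneg (v : WithBot ℝ) : 0 ≤ toLex (tpow v) := by
  rcases eq_or_ne v ⊥ with rfl | hv
  · simp
  · exact (tpow_pos hv).le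

theorem tpow_mono : Monotone fun v => toLex (tpow v) := by
  intro v w hvw
  induction w with
  | bot => simp [le_bot_iff.mp hvw]
  | coe b =>
    induction v with
    | bot => exact tpow_nonneg b
    | coe a =>
      rcases (WithBot.coe_le_coe.mp hvw).eq_or_lt with rfl | hab
      · rfl
      have hord : (tpow b).orderTop < (tpow a).orderTop := by
        rw [tpow_coe, tpow_coe, orderTop_single one_ne_zero, orderTop_single one_ne_zero]
        exact WithTop.coe_lt_coe.mpr (neg_lt_neg hab)
      have := (abs_lt_abs_of_orderTop_ofLex (x := toLex (tpow a)) (y := toLex (tpow b)) hord).le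
      rwa [abs_of_nonneg (tpow_nonneg _), abs_of_nonneg (tpow_nonneg _)] at this

theorem sum_nonneg_of_card_sub_one_nsmul_le {M ι : Type*} [AddCommGroup M] [PartialOrder M]
    [IsOrderedAddMonoid M] [Fintype ι] {f : ι → M} {u : M} (k₀ : ι)
    (hk₀ : (Fintype.card ι - 1) • u ≤ f k₀) (hf : ∀ k, -u ≤ f k) : 0 ≤ ∑ k, f k := by
  have hrest := card_nsmul_le_sum (univ.erase k₀) f (-u) fun k _ => hf k
  rw [card_erase_of_mem (mem_univ k₀), card_univ, smul_neg] at hrest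
  rw [← add_sum_erase univ f (mem_univ k₀)]
  exact (add_neg_cancel _).ge.trans (add_le_add hk₀ hrest)

theorem sup_univ_option {α ι : Type*} [SemilatticeSup α] [OrderBot α] [Fintype ι]
    (g : Option ι → α) : univ.sup g = (univ.sup fun j => g (some j)) ⊔ g none := by
  simp [univ_option, insertNone, sup_comm, Function.comp_def]

def signedLift (C : ℕ) (p q : WithBot ℝ) : K :=
  if p = ⊥ then -tpow q else C * tpow p

section signedLift

variable {C : ℕ} {p q : WithBot ℝ}

theorem signedLift_of_eq_bot (hp : p = ⊥) : signedLift C p q = -tpow q := if_pos hp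

theorem signedLift_of_ne_bot (hp : p ≠ ⊥) : signedLift C p q = C * tpow p := if_neg hp

theorem hahnVal_signedLift (hC : C ≠ 0) (hpq : p = ⊥ ∨ q = ⊥) :
    hahnVal (signedLift C p q) = p ⊔ q := by
  rcases eq_or_ne p ⊥ with hp | hp
  · rw [signedLift_of_eq_bot hp, hahnVal_neg, hahnVal_tpow, hp, bot_sup_eq]
  · rw [signedLift_of_ne_bot hp, hahnVal_mul, hahnVal_natCast hC, hahnVal_tpow, zero_add,
      hpq.resolve_left hp, sup_bot_eq]

theorem signedLift_spec (hC : C ≠ 0) (hpq : p = ⊥ ∨ q = ⊥) :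
    (p ≠ ⊥ → HahnPos (signedLift C p q) ∧ hahnVal (signedLift C p q) = p) ∧
    (q ≠ ⊥ → HahnNeg (signedLift C p q) ∧ hahnVal (signedLift C p q) = q) ∧
    (p = ⊥ ∧ q = ⊥ → signedLift C p q = 0) := by
  refine ⟨fun hp => ⟨?_, ?_⟩, fun hq => ⟨?_, ?_⟩, fun ⟨hp, hq⟩ => ?_⟩
  · rw [hahnPos_iff, signedLift_of_ne_bot hp, toLex_mul, toLex_natCast]
    exact mul_pos (Nat.cast_pos.mpr (Nat.pos_of_ne_zero hC)) (tpow_pos hp)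
  · rw [hahnVal_signedLift hC hpq, hpq.resolve_left hp, sup_bot_eq]
  · rw [hahnNeg_iff, signedLift_of_eq_bot (hpq.resolve_right hq), toLex_neg, neg_neg_iff_pos]
    exact tpow_pos hq
  · rw [hahnVal_signedLift hC hpq, hpq.resolve_right hq, bot_sup_eq]
  · rw [signedLift_of_eq_bot hp, hq, tpow_bot, neg_zero]

theorem signedLift_mul_tpow (v : WithBot ℝ) :
    signedLift C p q * tpow v = signedLift C (p + v) (q + v) := by
  rcases eq_or_ne p ⊥ with hp | hp
  · rw [signedLift_of_eq_bot hp, signedLift_of_eq_bot (by rw [hp, WithBot.bot_add]), tpow_add]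
    exact neg_mul (tpow q) (tpow v)
  rcases eq_or_ne v ⊥ with rfl | hv
  · simp [signedLift_of_eq_bot]
  · rw [signedLift_of_ne_bot hp, signedLift_of_ne_bot (WithBot.add_ne_bot.mpr ⟨hp, hv⟩),
      mul_assoc, tpow_add]

theorem signedLift_mul_nonpos (hp : p = ⊥) {y : K} (hy : 0 ≤ toLex y) :
    toLex (signedLift C p q * y) ≤ 0 := by
  rw [signedLift_of_eq_bot hp, toLex_mul, toLex_neg, neg_mul (toLex (tpow q)) (toLex y), neg_nonpos]
  exact mul_nonneg (tpow_nonneg q) hy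

theorem neg_tpow_le_signedLift {r : WithBot ℝ} (hq : q ≤ r) :
    -toLex (tpow r) ≤ toLex (signedLift C p q) := by
  rcases eq_or_ne p ⊥ with hp | hp
  · rw [signedLift_of_eq_bot hp, toLex_neg, neg_le_neg_iff]
    exact tpow_mono hq
  · rw [signedLift_of_ne_bot hp, toLex_mul, toLex_natCast]
    exact (neg_nonpos.mpr (tpow_nonneg r)).trans (mul_nonneg (Nat.cast_nonneg C) (tpow_nonneg p))

end signedLift

/-- The term `C t ^ (sup p)` outweighs the others, each of which is at least `-t ^ (sup p)`. -/
theorem sum_signedLift_nonneg {ι : Type*} [Fintype ι] {C : ℕ} (hC : Fintype.card ι ≤ C + 1)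
    {p q : ι → WithBot ℝ} (hpq : univ.sup q ≤ univ.sup p) :
    0 ≤ toLex (∑ k, signedLift C (p k) (q k)) := by
  rcases isEmpty_or_nonempty ι with hι | hι
  · simp
  obtain ⟨k₀, -, hk₀⟩ := exists_mem_eq_sup univ univ_nonempty p
  have hlow : ∀ k, -toLex (tpow (univ.sup p)) ≤ toLex (signedLift C (p k) (q k)) :=
    fun k => neg_tpow_le_signedLift ((le_sup (mem_univ k)).trans hpq)
  refine sum_nonneg_of_card_sub_one_nsmul_le (f := fun k => toLex (signedLift C (p k) (q k))) k₀
    ?_ hlow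
  rcases eq_or_ne (univ.sup p) ⊥ with hr | hr
  · simpa [hr] using hlow k₀
  · rw [hk₀] at hr ⊢
    rw [signedLift_of_ne_bot hr, toLex_mul, toLex_natCast, nsmul_eq_mul]
    exact mul_le_mul_of_nonneg_right (by exact_mod_cast (by omega : Fintype.card ι - 1 ≤ C))
      (tpow_nonneg _)

theorem sup_le_sup_of_sum_signedLift_mul_nonneg {ι : Type*} [Fintype ι] {C : ℕ} (hC : C ≠ 0)
    {p q : ι → WithBot ℝ} (hpq : ∀ k, p k = ⊥ ∨ q k = ⊥) {y : ι → K}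
    (hy : ∀ k, 0 ≤ toLex (y k)) (hsum : 0 ≤ toLex (∑ k, signedLift C (p k) (q k) * y k)) :
    (univ.sup fun k => q k + hahnVal (y k)) ≤ univ.sup fun k => p k + hahnVal (y k) := by
  have hval (k : ι) : hahnVal (signedLift C (p k) (q k) * y k) = (p k ⊔ q k) + hahnVal (y k) := by
    rw [hahnVal_mul, hahnVal_signedLift hC (hpq k)]
  refine Finset.sup_le fun k hk =>
    le_trans ?_ (hahnVal_le_of_sum_nonneg (fun l hl hnn => ?_) hsum k hk)
  · rw [hval]
    exact add_le_add_left le_sup_right _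
  · rcases eq_or_ne (p l) ⊥ with hp | hp
    · rw [toLex_eq_zero.mp ((signedLift_mul_nonpos hp (hy l)).antisymm hnn)]
      simp [hahnVal]
    · rw [hval, (hpq l).resolve_left hp, sup_bot_eq]
      exact le_sup (f := fun k => p k + hahnVal (y k)) hl

theorem hahnVal_sum_tpow_mul {ι : Type*} [Fintype ι] (c : ι → WithBot ℝ) {x : ι → K}
    (hx : ∀ j, 0 ≤ toLex (x j)) :
    hahnVal (∑ j, tpow (c j) * x j) = univ.sup fun j => c j + hahnVal (x j) := by
  rw [hahnVal_sum_of_nonneg (f := fun j => tpow (c j) * x j)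
    fun j _ => mul_nonneg (tpow_nonneg _) (hx j)]
  simp [hahnVal_mul]

section Polyhedron

variable {m n : ℕ} {Ap An : Matrix (Fin m) (Fin n) (WithBot ℝ)} {bp bn : Fin m → WithBot ℝ}
  {C : ℕ}

theorem mem_tropPolyhedron_of_lift (hA : ∀ i j, Ap i j = ⊥ ∨ An i j = ⊥)
    (hb : ∀ i, bp i = ⊥ ∨ bn i = ⊥) (hC : C ≠ 0) {x : Fin n → K} (hx : ∀ j, 0 ≤ toLex (x j))
    (hrow : ∀ i,
      0 ≤ toLex (∑ j, signedLift C (Ap i j) (An i j) * x j + signedLift C (bp i) (bn i))) :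
    (fun j => hahnVal (x j)) ∈ tropPolyhedron Ap An bp bn := by
  intro i
  have := sup_le_sup_of_sum_signedLift_mul_nonneg hC
    (p := fun o : Option (Fin n) => o.elim (bp i) (Ap i)) (q := fun o => o.elim (bn i) (An i))
    (y := fun o => o.elim 1 x)
    (fun o => o.rec (hb i) (hA i)) (fun o => o.rec (by simp) hx)
    (by simpa [Fintype.sum_option, add_comm] using hrow i)
  simpa [sup_univ_option, hahnVal_one] using this

theorem lift_nonneg_of_mem_tropPolyhedron (hC : n ≤ C) {x : Fin n → WithBot ℝ}
    (hx : x ∈ tropPolyhedron Ap An bp bn) (i : Fin m) :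
    0 ≤ toLex (∑ j, signedLift C (Ap i j) (An i j) * tpow (x j) + signedLift C (bp i) (bn i)) := by
  have := sum_signedLift_nonneg (ι := Option (Fin n)) (C := C) (by simpa using hC)
    (p := fun o : Option (Fin n) => o.elim (bp i) fun j => Ap i j + x j)
    (q := fun o => o.elim (bn i) fun j => An i j + x j) (by simpa [sup_univ_option] using hx i)
  simpa [Fintype.sum_option, signedLift_mul_tpow, add_comm] using this

end Polyhedron

end TropicalLift

open TropicalLift

/-- Any tropical linear program admits a lift over the field of Hahn series:
there are matrices `𝐀, 𝐛, 𝐜` with the prescribed signed valuations such that the polyhedron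
`𝓟 = {𝐱 ≥ 0 | 𝐀 𝐱 + 𝐛 ≥ 0}` maps onto `P(A, b)` under the valuation, and optimal solutions
of the lifted linear program give optimal solutions of the tropical one. -/
theorem tropical_lp_lift_exists (m n : ℕ)
    (Ap An : Matrix (Fin m) (Fin n) (WithBot ℝ)) (bp bn : Fin m → WithBot ℝ)
    (c : Fin n → WithBot ℝ)
    (hA : ∀ i j, Ap i j = ⊥ ∨ An i j = ⊥) (hb : ∀ i, bp i = ⊥ ∨ bn i = ⊥) :
    ∃ (AK : Matrix (Fin m) (Fin n) (HahnSeries ℝ ℝ)) (bK : Fin m → HahnSeries ℝ ℝ)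
      (cK : Fin n → HahnSeries ℝ ℝ),
      (∀ i j,
        (Ap i j ≠ ⊥ → HahnPos (AK i j) ∧ hahnVal (AK i j) = Ap i j) ∧
        (An i j ≠ ⊥ → HahnNeg (AK i j) ∧ hahnVal (AK i j) = An i j) ∧
        (Ap i j = ⊥ ∧ An i j = ⊥ → AK i j = 0)) ∧
      (∀ i,
        (bp i ≠ ⊥ → HahnPos (bK i) ∧ hahnVal (bK i) = bp i) ∧
        (bn i ≠ ⊥ → HahnNeg (bK i) ∧ hahnVal (bK i) = bn i) ∧
        (bp i = ⊥ ∧ bn i = ⊥ → bK i = 0)) ∧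
      (∀ j, HahnNonneg (cK j) ∧ hahnVal (cK j) = c j) ∧
      (∀ P : Set (Fin n → HahnSeries ℝ ℝ),
        P = {xK | (∀ j, HahnNonneg (xK j)) ∧ ∀ i, HahnNonneg (∑ j, AK i j * xK j + bK i)} →
        ({y | ∃ xK ∈ P, (fun j => hahnVal (xK j)) = y} = tropPolyhedron Ap An bp bn ∧
        ∀ xs ∈ P,
          (∀ yK ∈ P, HahnGe (∑ j, cK j * yK j) (∑ j, cK j * xs j)) →
          ∀ x ∈ tropPolyhedron Ap An bp bn,
            (univ.sup fun j => c j + hahnVal (xs j)) ≤ univ.sup fun j => c j + x j)) := by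
  refine ⟨fun i j => signedLift (n + 1) (Ap i j) (An i j),
    fun i => signedLift (n + 1) (bp i) (bn i), fun j => tpow (c j),
    fun i j => signedLift_spec n.succ_ne_zero (hA i j),
    fun i => signedLift_spec n.succ_ne_zero (hb i),
    fun j => ⟨hahnNonneg_iff.mpr (tpow_nonneg _), hahnVal_tpow _⟩, ?_⟩
  rintro P rfl
  simp only [hahnNonneg_iff, hahnGe_iff]
  have hlift (x : Fin n → WithBot ℝ) (hx : x ∈ tropPolyhedron Ap An bp bn) :
      (∀ j, 0 ≤ toLex (tpow (x j))) ∧ ∀ i, 0 ≤ toLex (∑ j,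
        signedLift (n + 1) (Ap i j) (An i j) * tpow (x j) + signedLift (n + 1) (bp i) (bn i)) :=
    ⟨fun j => tpow_nonneg _, lift_nonneg_of_mem_tropPolyhedron n.le_succ hx⟩
  refine ⟨Set.ext fun y => ⟨?_, fun hy => ⟨_, hlift y hy, funext fun j => hahnVal_tpow _⟩⟩, ?_⟩
  · rintro ⟨x, ⟨hx, hrow⟩, rfl⟩
    exact mem_tropPolyhedron_of_lift hA hb n.succ_ne_zero hx hrow
  · rintro xs ⟨hxs, -⟩ hopt x hx
    have hxs₀ : 0 ≤ toLex (∑ j, tpow (c j) * xs j) :=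
      sum_nonneg (s := univ) (f := fun j => toLex (tpow (c j) * xs j)) fun j _ =>
        mul_nonneg (tpow_nonneg (c j)) (hxs j)
    have hobj := hahnVal_le_hahnVal_of_le hxs₀ (hopt _ (hlift x hx))
    simpa [hahnVal_sum_tpow_mul c hxs, hahnVal_sum_tpow_mul c (fun j => tpow_nonneg (x j))]
      using hobj

end
end

section
/- Let M : Fin p → Fin q → WithBot G and s : Fin p → Fin q → ℤ with s i j ∈ {1, −1} for all i, j. Define M̃ : Fin p → Fin q → WithBot (G ×ₗ H) by M̃ i j := ⊥ if M i j = ⊥, and M̃ i j := (M i j, (s i j * ((i : ℕ) + 1)) • δ j) otherwise, where δ j : Fin q → ℝ is the j-th standard basis vector. Then M̃ is tropically generic: for every k and all injective maps r : Fin k → Fin p, c : Fin k → Fin q, the submatrix (i, j) ↦ M̃ (r i) (c j) is either tropically nonsingular or has tropical permanent ⊥. -/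
/-! The sum of the perturbed entries along a permutation `σ`, when finite, has infinitesimal
part `∑ᵢ ±(r i + 1) δ (c (σ i))`, whose coordinate at column `c j` is `±(r (σ⁻¹ j) + 1)`.
Its absolute value recovers the row `σ⁻¹ j`, so two permutations with the same finite sum
coincide, and the tropical permanent, if finite, is attained only once. -/

noncomputable section

/-- The group `H := Lex (Fin q → ℝ)`: `ℝ^q` with componentwise addition and the
lexicographic order. -/
noncomputable instance lexPiLinearOrderedAddCommGroup (q : ℕ) :
    IsOrderedCancelAddMonoid (Lex (Fin q → ℝ)) :=
  inferInstance

variable {G : Type*} [AddCommGroup G] [LinearOrder G] [IsOrderedAddMonoid G]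

/-- Tropical permanent of a square matrix over the max-plus semiring `WithBot G'`:
`tper M = ⊔_σ Σ_i M i (σ i)`, sums taken in `WithBot G'` (`⊥` is absorbing for `+`). -/
def tper {G' : Type*} [AddCommGroup G'] [LinearOrder G'] [IsOrderedAddMonoid G'] {k : ℕ}
    (M : Matrix (Fin k) (Fin k) (WithBot G')) : WithBot G' :=
  Finset.univ.sup (fun σ : Equiv.Perm (Fin k) => ∑ i, M i (σ i))

/-- A square matrix over `WithBot G'` is tropically nonsingular if its tropical permanent is
not `⊥` and exactly one permutation attains the maximum. -/
def TropNonsingular {G' : Type*} [AddCommGroup G'] [LinearOrder G'] [IsOrderedAddMonoid G'] {k : ℕ}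
    (M : Matrix (Fin k) (Fin k) (WithBot G')) : Prop :=
  tper M ≠ ⊥ ∧ ∃! σ : Equiv.Perm (Fin k), ∑ i, M i (σ i) = tper M

/-- A (rectangular) matrix over `WithBot G'` is tropically generic if each of its square
submatrices is tropically nonsingular or has tropical permanent `⊥`. -/
def TropGeneric {G' : Type*} [AddCommGroup G'] [LinearOrder G'] [IsOrderedAddMonoid G'] {p q : ℕ}
    (N : Fin p → Fin q → WithBot G') : Prop :=
  ∀ (k : ℕ) (r : Fin k → Fin p) (c : Fin k → Fin q),
    Function.Injective r → Function.Injective c →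
      TropNonsingular (Matrix.of fun i j => N (r i) (c j)) ∨
        tper (Matrix.of fun i j => N (r i) (c j)) = ⊥

theorem tropNonsingular_or_tper_eq_bot {G' : Type*} [AddCommGroup G'] [LinearOrder G']
    [IsOrderedAddMonoid G'] {k : ℕ} (N : Matrix (Fin k) (Fin k) (WithBot G'))
    (h : ∀ σ τ : Equiv.Perm (Fin k), ∑ i, N i (σ i) ≠ ⊥ →
      ∑ i, N i (σ i) = ∑ i, N i (τ i) → σ = τ) :
    TropNonsingular N ∨ tper N = ⊥ := by
  refine or_iff_not_imp_right.2 fun hbot => ⟨hbot, ?_⟩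
  obtain ⟨σ, -, hσ⟩ := Finset.univ.exists_mem_eq_sup Finset.univ_nonempty
    fun σ : Equiv.Perm (Fin k) => ∑ i, N i (σ i)
  have hσ : tper N = ∑ i, N i (σ i) := hσ
  exact ⟨σ, hσ.symm, fun τ hτ => h τ σ (hτ ▸ hbot) (hτ.trans hσ)⟩

theorem exists_sum_map_toLex_eq_coe {ι G H : Type*} [AddCommMonoid G] [AddCommMonoid H]
    (s : Finset ι) (f : ι → WithBot G) (v : ι → H)
    (h : ∑ i ∈ s, (f i).map (fun g => toLex (g, v i)) ≠ ⊥) :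
    ∃ g, ∑ i ∈ s, (f i).map (fun g => toLex (g, v i)) =
      ((toLex (g, ∑ i ∈ s, v i) : Lex (G × H)) : WithBot (Lex (G × H))) := by
  induction s using Finset.cons_induction with
  | empty => exact ⟨0, rfl⟩
  | cons a s _ ih =>
    rw [Finset.sum_cons] at h ⊢
    obtain ⟨hfa, hs⟩ := WithBot.add_ne_bot.1 h
    obtain ⟨g, hg⟩ := ih hs
    obtain ⟨x, hx⟩ := WithBot.ne_bot_iff_exists.1 (mt WithBot.map_eq_bot_iff.2 hfa)
    refine ⟨x + g, ?_⟩
    rw [hg, ← hx, Finset.sum_cons]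
    rfl

theorem sum_eq_sum_of_sum_map_toLex_eq {ι G H : Type*} [AddCommMonoid G] [AddCommMonoid H]
    {s : Finset ι} {f f' : ι → WithBot G} {v v' : ι → H}
    (hne : ∑ i ∈ s, (f i).map (fun g => toLex (g, v i)) ≠ ⊥)
    (heq : ∑ i ∈ s, (f i).map (fun g => toLex (g, v i)) =
      ∑ i ∈ s, (f' i).map (fun g => toLex (g, v' i))) :
    ∑ i ∈ s, v i = ∑ i ∈ s, v' i := by
  obtain ⟨g, hg⟩ := exists_sum_map_toLex_eq_coe s f v hne
  obtain ⟨g', hg'⟩ := exists_sum_map_toLex_eq_coe s f' v' (heq ▸ hne)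
  rw [hg, hg', WithBot.coe_inj, toLex_inj, Prod.mk.injEq] at heq
  exact heq.2

theorem Equiv.Perm.sum_single_apply {α ι R : Type*} [Fintype α] [DecidableEq ι] [AddCommMonoid R]
    {c : α → ι} (hc : Function.Injective c) (x : α → α → R) (σ : Equiv.Perm α) (j : α) :
    (∑ i, (Pi.single (c (σ i)) (x i (σ i)) : ι → R)) (c j) = x (σ.symm j) j := by
  rw [Finset.sum_apply, Finset.sum_eq_single_of_mem (σ.symm j) (Finset.mem_univ _)]
  · simp
  · intro i _ hi
    exact Pi.single_eq_of_ne (hc.ne fun h => hi (σ.eq_symm_apply.2 h.symm)) _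

theorem Equiv.Perm.eq_of_sum_single_eq {α ι R : Type*} [Fintype α] [DecidableEq ι]
    [AddCommMonoid R] {c : α → ι} (hc : Function.Injective c) {x : α → α → R}
    (hx : ∀ j, Function.Injective (x · j)) {σ τ : Equiv.Perm α}
    (h : ∑ i, (Pi.single (c (σ i)) (x i (σ i)) : ι → R) =
      ∑ i, (Pi.single (c (τ i)) (x i (τ i)) : ι → R)) :
    σ = τ := by
  refine Equiv.symm_bijective.injective (Equiv.ext fun j => hx j ?_)
  simpa only [Equiv.Perm.sum_single_apply hc] using congrFun h (c j)

theorem zsmul_toLex_single_one {ι R : Type*} [DecidableEq ι] [Ring R] (n : ℤ) (j : ι) :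
    n • toLex (Pi.single j (1 : R)) = toLex (Pi.single j (n : R) : ι → R) := by
  change toLex (n • (Pi.single j 1 : ι → R)) = _
  rw [← Pi.single_smul', zsmul_eq_mul, mul_one]

theorem Fin.injective_sign_mul_val_add_one {p : ℕ} {s : Fin p → ℤ}
    (hs : ∀ i, s i = 1 ∨ s i = -1) :
    Function.Injective fun i : Fin p => s i * ((i : ℕ) + 1 : ℤ) := by
  intro i i' h
  have habs : ∀ i, |s i * ((i : ℕ) + 1 : ℤ)| = (i : ℕ) + 1 := fun i => by
    rw [abs_mul, abs_of_pos (by positivity : (0 : ℤ) < (i : ℕ) + 1)]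
    rcases hs i with hsi | hsi <;> simp [hsi]
  have hval := congrArg abs h
  simp only [habs] at hval
  omega

/-- Perturbing the non-`⊥` entries of any matrix `M` over `WithBot G` by
the lexicographically infinitesimal vectors `(s i j * (i + 1)) • δ j` (with `s i j = ±1`)
produces a tropically generic matrix over `WithBot (G ×ₗ Lex (Fin q → ℝ))`. -/
theorem perturbed_matrix_tropically_generic (p q : ℕ)
    (M : Fin p → Fin q → WithBot G) (s : Fin p → Fin q → ℤ)
    (hs : ∀ i j, s i j = 1 ∨ s i j = -1) :
    TropGeneric (fun (i : Fin p) (j : Fin q) =>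
      WithBot.map
        (fun g => toLex
          (g, (s i j * (((i : ℕ) : ℤ) + 1)) • toLex (Pi.single j (1 : ℝ) : Fin q → ℝ)))
        (M i j)) := by
  intro k r c hr hc
  refine tropNonsingular_or_tper_eq_bot _ fun σ τ hne heq => ?_
  have hsnd := sum_eq_sum_of_sum_map_toLex_eq hne heq
  refine Equiv.Perm.eq_of_sum_single_eq hc
    (x := fun i j => ((s (r i) (c j) * ((r i : ℕ) + 1) : ℤ) : ℝ))
    (fun j => Int.cast_injective.comp ((Fin.injective_sign_mul_val_add_one (hs · (c j))).comp hr))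
    ?_
  simp only [zsmul_toLex_single_one] at hsnd
  exact hsnd

end
end

section
/- Let W : Matrix (Fin (k+1)) (Fin k) (WithBot G') be a matrix all of whose non-⊥ entries have layer 0, and let f : Fin (k+1) → WithBot G' be such that the layers of the non-⊥ values f i are pairwise distinct. Let M be the (k+1)×(k+1) matrix whose first k columns are those of W and whose last column is f, and for i : Fin (k+1) let W_î be W with row i deleted (rows reindexed via Fin.succAbove i). If for every i the matrix W_î is either tropically nonsingular or has tropical permanent ⊥, then M is either tropically nonsingular or has tropical permanent ⊥. -/
noncomputable section

variable {K₀ : Type*} [AddCommGroup K₀] [LinearOrder K₀] [IsOrderedAddMonoid K₀]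

/-!
Every permutation of `Fin (k + 1)` is `succAbovePerm i τ`: it sends row `i` to the border column
`f` and the other rows into `W_î` through a permutation `τ`, so its weight is `f i` plus the weight
of `τ` in `W_î`. If it is maximizing, then `τ` is maximizing for `W_î` and, all entries of `W`
having layer `0`, the layer of `tper M` is that of `f i`. The layers of the `f i` being distinct,
`tper M` determines `i`, and then the nonsingularity of `W_î` determines `τ`.
-/

open Equiv

namespace Fin

def succAbovePerm {n : ℕ} (i : Fin (n + 1)) (τ : Perm (Fin n)) : Perm (Fin (n + 1)) :=
  (finSuccEquiv' i).trans (τ.optionCongr.trans (finSuccEquiv' (last n)).symm)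

variable {n : ℕ} (i : Fin (n + 1)) (τ : Perm (Fin n))

@[simp]
lemma succAbovePerm_apply_self : succAbovePerm i τ i = last n := by
  simp [succAbovePerm]

@[simp]
lemma succAbovePerm_apply_succAbove (a : Fin n) :
    succAbovePerm i τ (i.succAbove a) = (τ a).castSucc := by
  simp [succAbovePerm]

lemma exists_eq_succAbovePerm (σ : Perm (Fin (n + 1))) :
    ∃ i τ, σ = succAbovePerm i τ := by
  classical
  set i := σ.symm (last n)
  set E : Perm (Option (Fin n)) := (finSuccEquiv' i).symm.trans (σ.trans (finSuccEquiv' (last n)))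
  have hE : E none = none := by simp [E, i]
  refine ⟨i, removeNone E, ?_⟩
  have : (removeNone E).optionCongr = E := by
    rw [map_equiv_removeNone, hE, swap_self, ← Perm.one_def, one_mul]
  ext j
  simp [succAbovePerm, this, E]

end Fin

lemma sum_snoc_succAbovePerm {α : Type*} [AddCommMonoid α] {k : ℕ}
    (W : Matrix (Fin (k + 1)) (Fin k) α) (f : Fin (k + 1) → α) (i : Fin (k + 1))
    (τ : Perm (Fin k)) :
    ∑ j, (Matrix.of fun i => Fin.snoc (W i) (f i)) j (i.succAbovePerm τ j) =
      f i + ∑ a, W.submatrix i.succAbove id a (τ a) := by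
  simp [Fin.sum_univ_succAbove _ i]

section TropicalPermanent

variable {G : Type*} [AddCommGroup G] [LinearOrder G] [IsOrderedAddMonoid G] {k : ℕ}

lemma sum_le_tper (M : Matrix (Fin k) (Fin k) (WithBot G)) (σ : Perm (Fin k)) :
    ∑ i, M i (σ i) ≤ tper M :=
  Finset.le_sup (f := fun σ : Perm (Fin k) => ∑ i, M i (σ i)) (Finset.mem_univ σ)

lemma exists_sum_eq_tper (M : Matrix (Fin k) (Fin k) (WithBot G)) :
    ∃ σ : Perm (Fin k), ∑ i, M i (σ i) = tper M := by
  obtain ⟨σ, -, hσ⟩ := Finset.exists_mem_eq_sup Finset.univ Finset.univ_nonempty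
    (fun σ : Perm (Fin k) => ∑ i, M i (σ i))
  exact ⟨σ, hσ.symm⟩

variable (W : Matrix (Fin (k + 1)) (Fin k) (WithBot G)) (f : Fin (k + 1) → WithBot G)

lemma sum_submatrix_eq_tper (i : Fin (k + 1)) (τ : Perm (Fin k))
    (hne : tper (Matrix.of fun i => Fin.snoc (W i) (f i)) ≠ ⊥)
    (hmax : ∑ j, (Matrix.of fun i => Fin.snoc (W i) (f i)) j (i.succAbovePerm τ j) =
      tper (Matrix.of fun i => Fin.snoc (W i) (f i))) :
    ∑ a, W.submatrix i.succAbove id a (τ a) = tper (W.submatrix i.succAbove id) := by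
  rw [sum_snoc_succAbovePerm] at hmax
  have hfi : f i ≠ ⊥ := fun h => hne (by rw [← hmax, h, WithBot.bot_add])
  obtain ⟨τ₀, hτ₀⟩ := exists_sum_eq_tper (W.submatrix i.succAbove id)
  refine le_antisymm (sum_le_tper _ τ) ((WithBot.add_le_add_iff_left hfi).mp ?_)
  calc f i + tper (W.submatrix i.succAbove id)
      = ∑ j, (Matrix.of fun i => Fin.snoc (W i) (f i)) j (i.succAbovePerm τ₀ j) := by
        rw [sum_snoc_succAbovePerm, hτ₀]
    _ ≤ _ := sum_le_tper _ _
    _ = f i + ∑ a, W.submatrix i.succAbove id a (τ a) := hmax.symm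

end TropicalPermanent

section Layer

variable {K : Type*} [AddMonoid K]

def layer : ℝ ×ₗ K →+ ℝ where
  toFun w := (ofLex w).1
  map_zero' := rfl
  map_add' _ _ := rfl

def layerZero : AddSubmonoid (WithBot (ℝ ×ₗ K)) where
  carrier := {x | ∀ w : ℝ ×ₗ K, x = ↑w → layer w = 0}
  zero_mem' w hw := by rw [← WithBot.coe_zero, WithBot.coe_inj] at hw; simp [← hw]
  add_mem' {x y} hx hy w hw := by
    induction x using WithBot.recBotCoe with
    | bot => simp at hw
    | coe a =>
      induction y using WithBot.recBotCoe with
      | bot => simp at hw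
      | coe b =>
        rw [← WithBot.coe_add, WithBot.coe_inj] at hw
        rw [← hw, map_add, hx a rfl, hy b rfl, add_zero]

lemma exists_layer_eq_of_add_eq_coe {x y : WithBot (ℝ ×ₗ K)} (hy : y ∈ layerZero)
    {m : ℝ ×ₗ K} (h : x + y = ↑m) : ∃ w : ℝ ×ₗ K, x = ↑w ∧ layer w = layer m := by
  induction x using WithBot.recBotCoe with
  | bot => simp at h
  | coe w =>
    induction y using WithBot.recBotCoe with
    | bot => simp at h
    | coe z =>
      rw [← WithBot.coe_add, WithBot.coe_inj] at h
      exact ⟨w, rfl, by rw [← h, map_add, hy z rfl, add_zero]⟩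

end Layer

/-- Over `G' := ℝ ×ₗ K₀`, let `W` be a `(k+1) × k` matrix all of whose
non-`⊥` entries have layer `0`, and let `f` be a column whose non-`⊥` values have pairwise
distinct layers.  If every matrix `W_î` (`W` with row `i` deleted) is tropically nonsingular
or has tropical permanent `⊥`, then the bordered matrix `M = (W | f)` is tropically
nonsingular or has tropical permanent `⊥`. -/
theorem bordered_matrix_tropically_generic (k : ℕ)
    (W : Matrix (Fin (k + 1)) (Fin k) (WithBot (ℝ ×ₗ K₀)))
    (hW : ∀ i j (w : ℝ ×ₗ K₀), W i j = ↑w → (ofLex w).1 = 0)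
    (f : Fin (k + 1) → WithBot (ℝ ×ₗ K₀))
    (hf : ∀ i i' : Fin (k + 1), i ≠ i' → ∀ w w' : ℝ ×ₗ K₀,
      f i = ↑w → f i' = ↑w' → (ofLex w).1 ≠ (ofLex w').1)
    (hWhat : ∀ i : Fin (k + 1),
      TropNonsingular (Matrix.of fun a b => W (i.succAbove a) b) ∨
        tper (Matrix.of fun a b => W (i.succAbove a) b) = ⊥) :
    TropNonsingular (Matrix.of fun i => Fin.snoc (W i) (f i)) ∨
      tper (Matrix.of fun i => Fin.snoc (W i) (f i)) = ⊥ := by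
  by_cases hbot : tper (Matrix.of fun i => Fin.snoc (W i) (f i)) = ⊥
  · exact Or.inr hbot
  refine Or.inl ⟨hbot, ?_⟩
  obtain ⟨m, hm⟩ := WithBot.ne_bot_iff_exists.mp hbot
  have hlayer (i : Fin (k + 1)) (τ : Perm (Fin k))
      (h : ∑ j, (Matrix.of fun i => Fin.snoc (W i) (f i)) j (i.succAbovePerm τ j) = ↑m) :
      ∃ w : ℝ ×ₗ K₀, f i = ↑w ∧ layer w = layer m := by
    rw [sum_snoc_succAbovePerm] at h
    exact exists_layer_eq_of_add_eq_coe (sum_mem fun a _ => hW _ _) h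
  obtain ⟨σ₀, hσ₀⟩ := exists_sum_eq_tper (Matrix.of fun i => Fin.snoc (W i) (f i))
  refine ⟨σ₀, hσ₀, fun σ hσ => ?_⟩
  obtain ⟨i, τ, rfl⟩ := Fin.exists_eq_succAbovePerm σ
  obtain ⟨i₀, τ₀, rfl⟩ := Fin.exists_eq_succAbovePerm σ₀
  obtain rfl : i = i₀ := by
    by_contra hne
    obtain ⟨w, hw, hwm⟩ := hlayer i τ (hσ.trans hm.symm)
    obtain ⟨w₀, hw₀, hw₀m⟩ := hlayer i₀ τ₀ (hσ₀.trans hm.symm)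
    exact hf i i₀ hne w w₀ hw hw₀ (hwm.trans hw₀m.symm)
  have hτ := sum_submatrix_eq_tper W f i τ hbot hσ
  have hminor : tper (W.submatrix i.succAbove id) ≠ ⊥ := by
    rw [← hτ]
    intro h
    rw [sum_snoc_succAbovePerm, h, WithBot.add_bot] at hσ
    exact hbot hσ.symm
  rw [((hWhat i).resolve_right hminor).2.unique hτ (sum_submatrix_eq_tper W f i τ₀ hbot hσ₀)]

end
end
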